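/- Let η = (K1, K2, K3, K4, κ3, κ6, κ9, κ12) be a tuple of positive real parameters with a(η) > 0 and b(η) < 0. If −b(η) ≤ 4·K3^{−1}·(K1^2·K2·K3^3·K4^2·κ3·κ6^2·κ9^2·κ12·a(η))^{1/4} + 3·(K1^2·K4·κ6^2·κ9^2·a(η))^{1/3} + 2·(K2·K3·κ3·κ12·a(η))^{1/2} + 3·K2^{−1}·(K1·K2^2·K3·K4^2·κ3·κ6^2·κ9^2·κ12)^{1/3}, then p_{η,H}(x1,x3) ≥ 0 for all x1 > 0, x3 > 0. -/

import Mathlib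

/-!
Set `m = K1 K2 K3 κ3 κ6 κ12 x1² x3`; the `x1² x3` term of `p_{η,H}` is `b(η) m`, and every other
coefficient is nonnegative. The exponent `(2,1)` of `m` is the barycentre of four groups of
exponents of the other monomials, which together use each of them once (the monomials `x1 x3` and
`x1³ x3`, whose coefficients carry a factor `2`, contribute two equal halves to their group). AM-GM on
each group bounds `m` times one summand of the right-hand side of the hypothesis, so
`p_{η,H} ≥ m (b(η) + RHS) ≥ 0`.
-/

/-- The bivariate polynomial `p_{η,H}` supported on the hexagonal face `H`. -/
def pEtaH (K1 K2 K3 K4 κ3 κ6 κ9 κ12 x1 x3 : ℝ) : ℝ :=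
  K2 * κ3 * (κ3 * κ12 - κ6 * κ9) *
      (K2 * K4 * κ3 * κ9 * x1 ^ 4 * x3 ^ 2 + K1 * K3 * κ6 * κ12 * x1 ^ 2 * x3 ^ 2
        + K2 * K3 * κ3 * κ12 * x1 ^ 3 * x3 ^ 2)
    + K1 * K2 * K3 * κ3 * κ6 * κ12 * ((K2 + K3) * κ3 * κ12 - (K1 + K4) * κ6 * κ9)
        * x1 ^ 2 * x3
    + K1 * κ6 *
        (K2 ^ 2 * K4 * κ3 ^ 2 * κ9 ^ 2 * x1 ^ 4 * x3
          + 2 * K2 * K3 * K4 * κ3 ^ 2 * κ9 * κ12 * x1 ^ 3 * x3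
          + K1 * K2 * K3 * K4 * κ3 * κ6 * κ9 * κ12 * x1 ^ 2
          + 2 * K1 * K2 * K3 * κ3 * κ6 * κ12 ^ 2 * x1 * x3
          + K1 * K2 * K3 ^ 2 * κ3 * κ6 * κ12 ^ 2 * x1
          + K1 * K3 ^ 2 * κ6 ^ 2 * κ12 ^ 2 * x3
          + K1 ^ 2 * K3 ^ 2 * κ6 ^ 2 * κ12 ^ 2)

open Finset

namespace Real

theorem card_mul_rpow_mul_le_sum {ι : Type*} (s : Finset ι) {z : ι → ℝ} {t y : ℝ}
    (hz : ∀ i ∈ s, 0 ≤ z i) (ht : 0 ≤ t) (hy : 0 ≤ y) (h : ∏ i ∈ s, z i = t * y ^ #s) :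
    #s * (t ^ (1 / (#s : ℝ)) * y) ≤ ∑ i ∈ s, z i := by
  rcases s.eq_empty_or_nonempty with rfl | hs
  · simp
  have hcard : (0 : ℝ) < #s := by exact_mod_cast hs.card_pos
  have hmean := geom_mean_le_arith_mean s (fun _ ↦ 1) z (fun _ _ ↦ zero_le_one)
    (by simpa using hcard) hz
  simp only [rpow_one, sum_const, nsmul_eq_mul, mul_one, one_mul, h] at hmean
  rw [mul_rpow ht (by positivity), pow_rpow_inv_natCast hy hs.card_pos.ne',
    le_div_iff₀ hcard, ← one_div] at hmean
  linarith

variable {u v w x t y : ℝ}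

theorem two_mul_rpow_mul_le_add (hu : 0 ≤ u) (hv : 0 ≤ v) (ht : 0 ≤ t) (hy : 0 ≤ y)
    (h : u * v = t * y ^ 2) : 2 * (t ^ ((1 : ℝ) / 2) * y) ≤ u + v := by
  simpa [Fin.sum_univ_two, Fin.prod_univ_two] using
    card_mul_rpow_mul_le_sum univ (z := ![u, v]) (by simp [Fin.forall_fin_two, *]) ht hy
      (by simpa [Fin.prod_univ_two] using h)

theorem three_mul_rpow_mul_le_add (hu : 0 ≤ u) (hv : 0 ≤ v) (hw : 0 ≤ w) (ht : 0 ≤ t)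
    (hy : 0 ≤ y) (h : u * v * w = t * y ^ 3) :
    3 * (t ^ ((1 : ℝ) / 3) * y) ≤ u + v + w := by
  simpa [Fin.sum_univ_three, Fin.prod_univ_three] using
    card_mul_rpow_mul_le_sum univ (z := ![u, v, w]) (by simp [Fin.forall_fin_succ, *]) ht hy
      (by simpa [Fin.prod_univ_three] using h)

theorem four_mul_rpow_mul_le_add (hu : 0 ≤ u) (hv : 0 ≤ v) (hw : 0 ≤ w) (hx : 0 ≤ x)
    (ht : 0 ≤ t) (hy : 0 ≤ y) (h : u * v * w * x = t * y ^ 4) :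
    4 * (t ^ ((1 : ℝ) / 4) * y) ≤ u + v + w + x := by
  simpa [Fin.sum_univ_four, Fin.prod_univ_four] using
    card_mul_rpow_mul_le_sum univ (z := ![u, v, w, x]) (by simp [Fin.forall_fin_succ, *]) ht hy
      (by simpa [Fin.prod_univ_four] using h)

end Real

/- `circuit_ij_kl_…` is AM-GM on the monomials of `p_{η,H}` with exponents `(i,j), (k,l), …` in
`(x1, x3)`. -/
section Circuits

variable {K1 K2 K3 K4 κ3 κ6 κ9 κ12 a x1 x3 : ℝ}

theorem circuit_42_20_11 (hK1 : 0 ≤ K1) (hK2 : 0 ≤ K2) (hK3 : 0 < K3) (hK4 : 0 ≤ K4)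
    (hκ3 : 0 ≤ κ3) (hκ6 : 0 ≤ κ6) (hκ9 : 0 ≤ κ9) (hκ12 : 0 ≤ κ12) (ha : 0 ≤ a)
    (hx1 : 0 ≤ x1) (hx3 : 0 ≤ x3) :
    4 * ((K1 ^ 2 * K2 * K3 ^ 3 * K4 ^ 2 * κ3 * κ6 ^ 2 * κ9 ^ 2 * κ12 * a) ^ ((1 : ℝ) / 4)
        * (K3⁻¹ * (K1 * K2 * K3 * κ3 * κ6 * κ12 * x1 ^ 2 * x3)))
      ≤ K2 * κ3 * a * (K2 * K4 * κ3 * κ9 * x1 ^ 4 * x3 ^ 2)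
        + K1 * κ6 * (K1 * K2 * K3 * K4 * κ3 * κ6 * κ9 * κ12 * x1 ^ 2)
        + K1 * κ6 * (K1 * K2 * K3 * κ3 * κ6 * κ12 ^ 2 * x1 * x3)
        + K1 * κ6 * (K1 * K2 * K3 * κ3 * κ6 * κ12 ^ 2 * x1 * x3) := by
  refine Real.four_mul_rpow_mul_le_add (by positivity) (by positivity) (by positivity)
    (by positivity) (by positivity) (by positivity) ?_
  field_simp

theorem circuit_22_41_00 (hK1 : 0 ≤ K1) (hK2 : 0 ≤ K2) (hK3 : 0 ≤ K3) (hK4 : 0 ≤ K4)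
    (hκ3 : 0 ≤ κ3) (hκ6 : 0 ≤ κ6) (hκ12 : 0 ≤ κ12) (ha : 0 ≤ a) (hx3 : 0 ≤ x3) :
    3 * ((K1 ^ 2 * K4 * κ6 ^ 2 * κ9 ^ 2 * a) ^ ((1 : ℝ) / 3)
        * (K1 * K2 * K3 * κ3 * κ6 * κ12 * x1 ^ 2 * x3))
      ≤ K2 * κ3 * a * (K1 * K3 * κ6 * κ12 * x1 ^ 2 * x3 ^ 2)
        + K1 * κ6 * (K2 ^ 2 * K4 * κ3 ^ 2 * κ9 ^ 2 * x1 ^ 4 * x3)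
        + K1 * κ6 * (K1 ^ 2 * K3 ^ 2 * κ6 ^ 2 * κ12 ^ 2) := by
  refine Real.three_mul_rpow_mul_le_add (by positivity) (by positivity) (by positivity)
    (by positivity) (by positivity) ?_
  ring

theorem circuit_32_10 (hK1 : 0 ≤ K1) (hK2 : 0 ≤ K2) (hK3 : 0 ≤ K3)
    (hκ3 : 0 ≤ κ3) (hκ6 : 0 ≤ κ6) (hκ12 : 0 ≤ κ12) (ha : 0 ≤ a)
    (hx1 : 0 ≤ x1) (hx3 : 0 ≤ x3) :
    2 * ((K2 * K3 * κ3 * κ12 * a) ^ ((1 : ℝ) / 2)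
        * (K1 * K2 * K3 * κ3 * κ6 * κ12 * x1 ^ 2 * x3))
      ≤ K2 * κ3 * a * (K2 * K3 * κ3 * κ12 * x1 ^ 3 * x3 ^ 2)
        + K1 * κ6 * (K1 * K2 * K3 ^ 2 * κ3 * κ6 * κ12 ^ 2 * x1) := by
  refine Real.two_mul_rpow_mul_le_add (by positivity) (by positivity) (by positivity)
    (by positivity) ?_
  ring

theorem circuit_31_31_01 (hK1 : 0 ≤ K1) (hK2 : 0 < K2) (hK3 : 0 ≤ K3) (hK4 : 0 ≤ K4)
    (hκ3 : 0 ≤ κ3) (hκ6 : 0 ≤ κ6) (hκ9 : 0 ≤ κ9) (hκ12 : 0 ≤ κ12)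
    (hx1 : 0 ≤ x1) (hx3 : 0 ≤ x3) :
    3 * ((K1 * K2 ^ 2 * K3 * K4 ^ 2 * κ3 * κ6 ^ 2 * κ9 ^ 2 * κ12) ^ ((1 : ℝ) / 3)
        * (K2⁻¹ * (K1 * K2 * K3 * κ3 * κ6 * κ12 * x1 ^ 2 * x3)))
      ≤ K1 * κ6 * (K2 * K3 * K4 * κ3 ^ 2 * κ9 * κ12 * x1 ^ 3 * x3)
        + K1 * κ6 * (K2 * K3 * K4 * κ3 ^ 2 * κ9 * κ12 * x1 ^ 3 * x3)
        + K1 * κ6 * (K1 * K3 ^ 2 * κ6 ^ 2 * κ12 ^ 2 * x3) := by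
  refine Real.three_mul_rpow_mul_le_add (by positivity) (by positivity) (by positivity)
    (by positivity) (by positivity) ?_
  field_simp

end Circuits

theorem pEtaH_nonneg_of_cover12_general
    (K1 K2 K3 K4 κ3 κ6 κ9 κ12 : ℝ)
    (hK1 : 0 < K1) (hK2 : 0 < K2) (hK3 : 0 < K3) (hK4 : 0 < K4)
    (hκ3 : 0 < κ3) (hκ6 : 0 < κ6) (hκ9 : 0 < κ9) (hκ12 : 0 < κ12)
    (ha : 0 < κ3 * κ12 - κ6 * κ9)
    (hcond : -((K2 + K3) * κ3 * κ12 - (K1 + K4) * κ6 * κ9) ≤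
      4 * K3⁻¹ * (K1 ^ 2 * K2 * K3 ^ 3 * K4 ^ 2 * κ3 * κ6 ^ 2 * κ9 ^ 2 * κ12
            * (κ3 * κ12 - κ6 * κ9)) ^ ((1 : ℝ) / 4)
        + 3 * (K1 ^ 2 * K4 * κ6 ^ 2 * κ9 ^ 2 * (κ3 * κ12 - κ6 * κ9)) ^ ((1 : ℝ) / 3)
        + 2 * (K2 * K3 * κ3 * κ12 * (κ3 * κ12 - κ6 * κ9)) ^ ((1 : ℝ) / 2)
        + 3 * K2⁻¹ * (K1 * K2 ^ 2 * K3 * K4 ^ 2 * κ3 * κ6 ^ 2 * κ9 ^ 2 * κ12) ^ ((1 : ℝ) / 3)) :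
    ∀ x1 x3 : ℝ, 0 < x1 → 0 < x3 → 0 ≤ pEtaH K1 K2 K3 K4 κ3 κ6 κ9 κ12 x1 x3 := by
  intro x1 x3 hx1 hx3
  have h₁ := circuit_42_20_11 hK1.le hK2.le hK3 hK4.le hκ3.le hκ6.le hκ9.le hκ12.le ha.le
    hx1.le hx3.le
  have h₂ := circuit_22_41_00 (κ9 := κ9) (x1 := x1) hK1.le hK2.le hK3.le hK4.le hκ3.le hκ6.le
    hκ12.le ha.le hx3.le
  have h₃ := circuit_32_10 hK1.le hK2.le hK3.le hκ3.le hκ6.le hκ12.le ha.le hx1.le hx3.le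
  have h₄ := circuit_31_31_01 hK1.le hK2 hK3.le hK4.le hκ3.le hκ6.le hκ9.le hκ12.le
    hx1.le hx3.le
  have hcond_mul := mul_le_mul_of_nonneg_right hcond
    (by positivity : 0 ≤ K1 * K2 * K3 * κ3 * κ6 * κ12 * x1 ^ 2 * x3)
  rw [pEtaH]
  linear_combination h₁ + h₂ + h₃ + h₄ + hcond_mul

/-- Sufficient condition for nonnegativity of `p_{η,H}` on the positive
orthant coming from the pure cover. -/
theorem pEtaH_nonneg_of_cover12
    (K1 K2 K3 K4 κ3 κ6 κ9 κ12 : ℝ)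
    (hK1 : 0 < K1) (hK2 : 0 < K2) (hK3 : 0 < K3) (hK4 : 0 < K4)
    (hκ3 : 0 < κ3) (hκ6 : 0 < κ6) (hκ9 : 0 < κ9) (hκ12 : 0 < κ12)
    (ha : 0 < κ3 * κ12 - κ6 * κ9)
    (hb : (K2 + K3) * κ3 * κ12 - (K1 + K4) * κ6 * κ9 < 0)
    (hcond : -((K2 + K3) * κ3 * κ12 - (K1 + K4) * κ6 * κ9) ≤
      4 * K3⁻¹ * (K1 ^ 2 * K2 * K3 ^ 3 * K4 ^ 2 * κ3 * κ6 ^ 2 * κ9 ^ 2 * κ12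
            * (κ3 * κ12 - κ6 * κ9)) ^ ((1 : ℝ) / 4)
        + 3 * (K1 ^ 2 * K4 * κ6 ^ 2 * κ9 ^ 2 * (κ3 * κ12 - κ6 * κ9)) ^ ((1 : ℝ) / 3)
        + 2 * (K2 * K3 * κ3 * κ12 * (κ3 * κ12 - κ6 * κ9)) ^ ((1 : ℝ) / 2)
        + 3 * K2⁻¹ * (K1 * K2 ^ 2 * K3 * K4 ^ 2 * κ3 * κ6 ^ 2 * κ9 ^ 2 * κ12) ^ ((1 : ℝ) / 3)) :
    ∀ x1 x3 : ℝ, 0 < x1 → 0 < x3 → 0 ≤ pEtaH K1 K2 K3 K4 κ3 κ6 κ9 κ12 x1 x3 :=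
  pEtaH_nonneg_of_cover12_general K1 K2 K3 K4 κ3 κ6 κ9 κ12 hK1 hK2 hK3 hK4 hκ3 hκ6 hκ9 hκ12 ha hcond
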